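/- Let P₁, P₂ be PCSP supports on X₁, X₂ with X = X₁ ∪ X₂, and suppose τ is a rooted binary tree topology on X such that every PCSP of τ|X₁ belongs to P₁ and every PCSP of τ|X₂ belongs to P₂. Let (t → s) be a PCSP of τ and, for i = 1, 2, let a_i be the most recent ancestor of s in τ (possibly the root placeholder ⟨X, ∅⟩) whose restriction a_i|X_i is a subsplit of P_i. If the state (t/U(s), (a₁|X₁)/(U(s)∩X₁), (a₂|X₂)/(U(s)∩X₂)) is reachable, then (t → s) ∈ M(P₁, P₂). -/

import Mathlib

open Finset

attribute [local instance] Classical.propDecidable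

/-- A subsplit on taxa of type `α`: an unordered pair of finite subsets of taxa. -/
abbrev Subsplit (α : Type*) := Sym2 (Finset α)

/-- A parent-child subsplit pair (PCSP): a pair `(t, s)` of subsplits. -/
abbrev PCSPair (α : Type*) := Subsplit α × Subsplit α

namespace Subsplit

variable {α : Type*} [DecidableEq α]

/-- The parent clade `U(s)` of a subsplit: the union of its two child clades. -/
def clade (s : Subsplit α) : Finset α :=
  Sym2.lift ⟨fun Y Z => Y ∪ Z, fun _ _ => Finset.union_comm _ _⟩ s

/-- A subsplit is valid when its two child clades are disjoint. -/
def Valid (s : Subsplit α) : Prop :=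
  Sym2.lift ⟨fun Y Z => Disjoint Y Z, fun _ _ => propext disjoint_comm⟩ s

/-- A subsplit is nontrivial when both child clades are nonempty. -/
def Nontriv (s : Subsplit α) : Prop :=
  Sym2.lift ⟨fun Y Z => Y.Nonempty ∧ Z.Nonempty, fun _ _ => propext and_comm⟩ s

/-- Restriction of a subsplit to a taxon subset `B`. -/
def restrict (s : Subsplit α) (B : Finset α) : Subsplit α := Sym2.map (fun Y => Y ∩ B) s

end Subsplit

section Defs

variable {α : Type*} [DecidableEq α]

/-- `τ` is a rooted binary tree topology on the clade `W`. -/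
structure IsTopology (W : Finset α) (τ : Finset (Subsplit α)) : Prop where
  two_le : 2 ≤ W.card
  valid : ∀ s ∈ τ, Subsplit.Valid s
  nontriv : ∀ s ∈ τ, Subsplit.Nontriv s
  root : ∃! s, s ∈ τ ∧ Subsplit.clade s = W
  children : ∀ s ∈ τ, ∀ C ∈ s, 2 ≤ C.card → ∃! s', s' ∈ τ ∧ Subsplit.clade s' = C
  parentEx : ∀ s ∈ τ, Subsplit.clade s = W ∨ ∃ t ∈ τ, Subsplit.clade s ∈ t

/-- Restriction of a topology (set of subsplits) to taxon subset `B`: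
restrict every subsplit and keep the nontrivial results. -/
noncomputable def restrictT (τ : Finset (Subsplit α)) (B : Finset α) : Finset (Subsplit α) :=
  (τ.image (fun s => Subsplit.restrict s B)).filter (fun s => Subsplit.Nontriv s)

/-- A subsplit support on taxon set `X'`: a set of valid nontrivial subsplits on `X'`. -/
def IsSupport (X' : Finset α) (S : Set (Subsplit α)) : Prop :=
  ∀ s ∈ S, Subsplit.Valid s ∧ Subsplit.Nontriv s ∧ Subsplit.clade s ⊆ X'

/-- `S(W)`: members of `S` dividing the clade `W`, together with the trivial subsplit `{W, ∅}`. -/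
def supportAt (S : Set (Subsplit α)) (W : Finset α) : Set (Subsplit α) :=
  {s | s ∈ S ∧ Subsplit.clade s = W} ∪ {Sym2.mk W (∅ : Finset α)}

/-- The set `s₁ ⊠ s₂` of the two candidate combinations of two subsplits. -/
def boxTimes (s₁ s₂ : Subsplit α) : Set (Subsplit α) :=
  {s | ∃ Y₁ Z₁ Y₂ Z₂ : Finset α, s₁ = Sym2.mk Y₁ Z₁ ∧ s₂ = Sym2.mk Y₂ Z₂ ∧
    (s = Sym2.mk (Y₁ ∪ Y₂) (Z₁ ∪ Z₂) ∨ s = Sym2.mk (Y₁ ∪ Z₂) (Z₁ ∪ Y₂))}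

/-- Reachable clades in the mutual subsplit support construction. -/
inductive ReachClade (S₁ S₂ : Set (Subsplit α)) (X₁ X₂ : Finset α) : Finset α → Prop
  | root : ReachClade S₁ S₂ X₁ X₂ (X₁ ∪ X₂)
  | step {W : Finset α} {s₁ s₂ s : Subsplit α} {C : Finset α} :
      ReachClade S₁ S₂ X₁ X₂ W →
      s₁ ∈ supportAt S₁ (W ∩ X₁) → s₂ ∈ supportAt S₂ (W ∩ X₂) →
      s ∈ boxTimes s₁ s₂ → Subsplit.Valid s → Subsplit.Nontriv s →
      C ∈ s → 2 ≤ C.card → ReachClade S₁ S₂ X₁ X₂ C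

/-- The mutual subsplit support `M(S₁, S₂)`. -/
def mutualSupport (S₁ S₂ : Set (Subsplit α)) (X₁ X₂ : Finset α) : Set (Subsplit α) :=
  {s | ∃ W s₁ s₂, ReachClade S₁ S₂ X₁ X₂ W ∧
    s₁ ∈ supportAt S₁ (W ∩ X₁) ∧ s₂ ∈ supportAt S₂ (W ∩ X₂) ∧
    s ∈ boxTimes s₁ s₂ ∧ Subsplit.Valid s ∧ Subsplit.Nontriv s}

/-- `(t, s)` is a PCSP on taxon set `X`: `s` is a valid nontrivial subsplit, and `t` is a
subsplit (or the root placeholder `⟨X, ∅⟩`) on `X` having `U(s)` as a child clade. -/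
def IsPCSPOn (X : Finset α) (p : PCSPair α) : Prop :=
  Subsplit.Valid p.2 ∧ Subsplit.Nontriv p.2 ∧ Subsplit.Valid p.1 ∧
    Subsplit.clade p.2 ∈ p.1 ∧ Subsplit.clade p.1 ⊆ X ∧
    (Subsplit.Nontriv p.1 ∨ p.1 = Sym2.mk X (∅ : Finset α))

/-- A PCSP support on taxon set `X'`. -/
def IsPCSPSupport (X' : Finset α) (P : Set (PCSPair α)) : Prop :=
  ∀ p ∈ P, IsPCSPOn X' p

/-- The subsplits of a PCSP support: subsplits occurring in some pair of `P`,
together with the root placeholder `⟨X', ∅⟩`. -/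
def subsplitsOfP (X' : Finset α) (P : Set (PCSPair α)) : Set (Subsplit α) :=
  {u | (∃ s, (u, s) ∈ P) ∨ (∃ t, (t, u) ∈ P)} ∪ {Sym2.mk X' (∅ : Finset α)}

/-- `P(t/W)`: the subsplits `s` with `U(s) = W` and `(t → s) ∈ P`,
together with the trivial subsplit `{W, ∅}`. -/
def pcspSupportAt (P : Set (PCSPair α)) (t : Subsplit α) (W : Finset α) : Set (Subsplit α) :=
  {s | Subsplit.clade s = W ∧ (t, s) ∈ P} ∪ {Sym2.mk W (∅ : Finset α)}

/-- Reachable states `(t/W, t₁/W₁, t₂/W₂)` in the mutual PCSP support construction. -/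
inductive ReachState (P₁ P₂ : Set (PCSPair α)) (X₁ X₂ : Finset α) :
    Subsplit α → Finset α → Subsplit α → Finset α → Subsplit α → Finset α → Prop
  | root : ReachState P₁ P₂ X₁ X₂ (Sym2.mk (X₁ ∪ X₂) (∅ : Finset α)) (X₁ ∪ X₂)
      (Sym2.mk X₁ (∅ : Finset α)) X₁ (Sym2.mk X₂ (∅ : Finset α)) X₂
  | step {t : Subsplit α} {W : Finset α} {t₁ : Subsplit α} {W₁ : Finset α}
      {t₂ : Subsplit α} {W₂ : Finset α} {s₁ s₂ s u₁ u₂ : Subsplit α} {C : Finset α} :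
      ReachState P₁ P₂ X₁ X₂ t W t₁ W₁ t₂ W₂ →
      s₁ ∈ pcspSupportAt P₁ t₁ W₁ → s₂ ∈ pcspSupportAt P₂ t₂ W₂ →
      s ∈ boxTimes s₁ s₂ → Subsplit.Valid s → Subsplit.Nontriv s →
      ((Subsplit.Nontriv s₁ ∧ u₁ = s₁) ∨ (¬ Subsplit.Nontriv s₁ ∧ u₁ = t₁)) →
      ((Subsplit.Nontriv s₂ ∧ u₂ = s₂) ∨ (¬ Subsplit.Nontriv s₂ ∧ u₂ = t₂)) →
      C ∈ s → 2 ≤ C.card →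
      ReachState P₁ P₂ X₁ X₂ s C u₁ (C ∩ X₁) u₂ (C ∩ X₂)

/-- The mutual PCSP support `M(P₁, P₂)`. -/
def mutualPCSP (P₁ P₂ : Set (PCSPair α)) (X₁ X₂ : Finset α) : Set (PCSPair α) :=
  {p | ∃ W t₁ W₁ t₂ W₂ s₁ s₂, ReachState P₁ P₂ X₁ X₂ p.1 W t₁ W₁ t₂ W₂ ∧
    s₁ ∈ pcspSupportAt P₁ t₁ W₁ ∧ s₂ ∈ pcspSupportAt P₂ t₂ W₂ ∧
    p.2 ∈ boxTimes s₁ s₂ ∧ Subsplit.Valid p.2 ∧ Subsplit.Nontriv p.2}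

/-- `PathTo M a c`: there is a chain of parent-child pairs of `M` from `a` down to `c`
(possibly empty, when `a = c`). -/
inductive PathTo (M : Set (PCSPair α)) : Subsplit α → Subsplit α → Prop
  | refl (a : Subsplit α) : PathTo M a a
  | cons {a b c : Subsplit α} : (a, b) ∈ M → PathTo M b c → PathTo M a c

/-- `(t, s)` is a PCSP of the topology `τ` on `X`: `s ∈ τ` and `t` is a member of `τ`
having `U(s)` as a child clade, or the root placeholder `⟨X, ∅⟩` when `U(s) = X`. -/
def IsPCSPOf (X : Finset α) (τ : Finset (Subsplit α)) (t s : Subsplit α) : Prop :=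
  s ∈ τ ∧ ((t ∈ τ ∧ Subsplit.clade s ∈ t) ∨
    (Subsplit.clade s = X ∧ t = Sym2.mk X (∅ : Finset α)))

/-- The set of PCSPs of a topology `τ` on `X`. -/
def pcspSet (X : Finset α) (τ : Finset (Subsplit α)) : Set (PCSPair α) :=
  {p | IsPCSPOf X τ p.1 p.2}

/-- `a` is an ancestor of `s` in `τ`: `a ∈ τ` (or the root placeholder) and `U(s)` is
contained in a child clade of `a`. -/
def IsAncestor (X : Finset α) (τ : Finset (Subsplit α)) (a s : Subsplit α) : Prop :=
  (a ∈ τ ∨ a = Sym2.mk X (∅ : Finset α)) ∧ ∃ C ∈ a, Subsplit.clade s ⊆ C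

/-- `d` is a strict descendant of `a`: `U(d)` is contained in a child clade of `a`. -/
def StrictDesc (a d : Subsplit α) : Prop := ∃ C ∈ a, Subsplit.clade d ⊆ C

/-- `d` is a (valid) descendant of `a`: `d = a`, or `U(d)` is contained in a child clade
of `a`. -/
def Descend (a d : Subsplit α) : Prop := d = a ∨ ∃ C ∈ a, Subsplit.clade d ⊆ C

/-- The parent subsplit of `s` in `τ` (on taxon set `X`): the member of `τ` having `U(s)`
as a child clade if one exists, otherwise the root placeholder `⟨X, ∅⟩`. -/
noncomputable def parentIn (X : Finset α) (τ : Finset (Subsplit α)) (s : Subsplit α) :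
    Subsplit α :=
  if h : ∃ t ∈ τ, Subsplit.clade s ∈ t then h.choose else Sym2.mk X (∅ : Finset α)

/-- The finite set of PCSPs of a topology `τ` on `X`. -/
noncomputable def pcspFinset (X : Finset α) (τ : Finset (Subsplit α)) : Finset (PCSPair α) :=
  τ.image (fun s => (parentIn X τ s, s))

/-- All (valid) subsplits on the taxon set `X`. -/
noncomputable def allSubsplits (X : Finset α) : Finset (Subsplit α) :=
  ((X.powerset ×ˢ X.powerset).image (fun p => Sym2.mk p.1 p.2)).filter (fun s => Subsplit.Valid s)

/-- All nontrivial (valid) subsplits dividing the clade `W`. -/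
noncomputable def subsplitsOn (W : Finset α) : Finset (Subsplit α) :=
  (W.powerset.image (fun Y => Sym2.mk Y (W \ Y))).filter (fun s => Subsplit.Nontriv s)

/-- All nontrivial subsplits whose parent clade is a child clade of `a`. -/
noncomputable def childSubsplits (a : Subsplit α) : Finset (Subsplit α) :=
  Sym2.lift ⟨fun Y Z => subsplitsOn Y ∪ subsplitsOn Z, fun _ _ => Finset.union_comm _ _⟩ a

end Defs

section CCD

variable {α : Type*} [DecidableEq α]

/-- CCD softmax conditional probability `q(s | U(s))`. -/
noncomputable def ccdCond (v : Subsplit α → ℝ) (s : Subsplit α) : ℝ :=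
  Real.exp (v s) / ∑ s' ∈ subsplitsOn (Subsplit.clade s), Real.exp (v s')

/-- CCD probability of a topology: `q(τ) = ∏_{s ∈ τ} q(s | U(s))`. -/
noncomputable def ccdTopProb (v : Subsplit α → ℝ) (τ : Finset (Subsplit α)) : ℝ :=
  ∏ s ∈ τ, ccdCond v s

/-- Unconditional subsplit probability `q(s)`: sum of `q(τ)` over topologies `τ ∈ T`
containing `s`. -/
noncomputable def ccdSubProb (T : Finset (Finset (Subsplit α))) (v : Subsplit α → ℝ)
    (s : Subsplit α) : ℝ :=
  ∑ τ ∈ T.filter (fun τ => s ∈ τ), ccdTopProb v τ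

/-- Unconditional clade probability `q(W)`: sum of `q(τ)` over topologies `τ ∈ T` in which
the clade `W` appears (i.e. `W = X` or `W` is a child clade of some subsplit of `τ`). -/
noncomputable def ccdCladeProb (X : Finset α) (T : Finset (Finset (Subsplit α)))
    (v : Subsplit α → ℝ) (W : Finset α) : ℝ :=
  ∑ τ ∈ T.filter (fun τ => W = X ∨ ∃ s ∈ τ, W ∈ s), ccdTopProb v τ

/-- Fuel-based recursion computing the CCD conditional path probability. -/
noncomputable def ccdPathAux (v : Subsplit α → ℝ) : ℕ → Subsplit α → Subsplit α → ℝ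
  | 0, a, d => if d = a then 1 else 0
  | n + 1, a, d => if d = a then 1 else
      ∑ s'' ∈ childSubsplits a, ccdCond v s'' * ccdPathAux v n s'' d

/-- CCD conditional path probability `q(a →* d | a)`: the sum over all descending chains of
subsplits from `a` to `d` of the product of the conditional probabilities along the chain. -/
noncomputable def ccdPath (v : Subsplit α → ℝ) (a d : Subsplit α) : ℝ :=
  ccdPathAux v ((Subsplit.clade a).card + 1) a d

/-- CCD conditional path probability starting from a clade:
`q(W →* d | W) = Σ_{s'' : U(s'') = W} q(s'' | U(s'')) q(s'' →* d | s'')`. -/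
noncomputable def ccdPathFromClade (v : Subsplit α → ℝ) (W : Finset α) (d : Subsplit α) : ℝ :=
  ∑ s'' ∈ subsplitsOn W, ccdCond v s'' * ccdPath v s'' d

end CCD

section SCD

variable {α : Type*} [DecidableEq α]

/-- SCD softmax conditional probability `q(s | t)`. -/
noncomputable def scdCond (v : PCSPair α → ℝ) (t s : Subsplit α) : ℝ :=
  Real.exp (v (t, s)) / ∑ s'' ∈ subsplitsOn (Subsplit.clade s), Real.exp (v (t, s''))

/-- SCD probability of a topology `τ` on `X`: the product over PCSPs `(t → s)` of `τ` of
`q(s | t)`. -/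
noncomputable def scdTopProb (v : PCSPair α → ℝ) (X : Finset α) (τ : Finset (Subsplit α)) : ℝ :=
  ∏ s ∈ τ, scdCond v (parentIn X τ s) s

/-- Unconditional subsplit probability `q(a)` for SCD-parameterized SBNs. -/
noncomputable def scdSubProb (T : Finset (Finset (Subsplit α))) (v : PCSPair α → ℝ)
    (X : Finset α) (a : Subsplit α) : ℝ :=
  ∑ τ ∈ T.filter (fun τ => a ∈ τ), scdTopProb v X τ

/-- Fuel-based recursion computing the SCD conditional path probability. -/
noncomputable def scdPathAux (v : PCSPair α → ℝ) : ℕ → Subsplit α → Subsplit α → ℝ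
  | 0, a, d => if d = a then 1 else 0
  | n + 1, a, d => if d = a then 1 else
      ∑ s'' ∈ childSubsplits a, scdCond v a s'' * scdPathAux v n s'' d

/-- SCD conditional path probability `q(a →* d | a)`. -/
noncomputable def scdPath (v : PCSPair α → ℝ) (a d : Subsplit α) : ℝ :=
  scdPathAux v ((Subsplit.clade a).card + 1) a d

/-- SCD conditional path probability from a subsplit `t` with designated child clade `W`:
`q(t/W →* d | t/W) = Σ_{s'' : U(s'') = W} q(s'' | t) q(s'' →* d | s'')`. -/
noncomputable def scdPathFrom (v : PCSPair α → ℝ) (t : Subsplit α) (W : Finset α)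
    (d : Subsplit α) : ℝ :=
  ∑ s'' ∈ subsplitsOn W, scdCond v t s'' * scdPath v s'' d

/-- Unconditional ancestor-descendant probability `q(a →* d)`: sum of `q(τ)` over topologies
`τ ∈ T` containing both `a` and `d` with `d` a descendant of `a`. -/
noncomputable def scdPairProb (T : Finset (Finset (Subsplit α))) (v : PCSPair α → ℝ)
    (X : Finset α) (a d : Subsplit α) : ℝ :=
  ∑ τ ∈ T.filter (fun τ => a ∈ τ ∧ d ∈ τ ∧ Descend a d), scdTopProb v X τ

end SCD

/-! Along a reachable state the clade `W` splits as `W ∩ X₁` and `W ∩ X₂`, each of which is a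
child clade of the current anchor `tᵢ` (or empty): combining `s₁ ⊠ s₂` never mixes the two sides
because the result is valid. Now restrict `s` to `Xᵢ`. If `s|Xᵢ` is trivial it is the trivial
member of `Pᵢ(aᵢ|Xᵢ / U(s) ∩ Xᵢ)`; otherwise `U(s) ∩ Xᵢ` is a child clade of `aᵢ|Xᵢ`, which is
either the root placeholder or a nontrivial subsplit of `τ|Xᵢ`, so `(aᵢ|Xᵢ → s|Xᵢ)` is a PCSP of
`τ|Xᵢ` and lies in `Pᵢ` by coverage. Finally `s` is recovered as a member of `s|X₁ ⊠ s|X₂`. -/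

namespace Subsplit

variable {α : Type*} [DecidableEq α]

@[simp]
lemma clade_mk (Y Z : Finset α) : clade (Sym2.mk Y Z) = Y ∪ Z := rfl

@[simp]
lemma restrict_mk (Y Z B : Finset α) : restrict (Sym2.mk Y Z) B = Sym2.mk (Y ∩ B) (Z ∩ B) :=
  Sym2.map_mk _ _ _

lemma clade_restrict (s : Subsplit α) (B : Finset α) : clade (restrict s B) = clade s ∩ B := by
  induction s using Sym2.ind with
  | _ Y Z => simp [union_inter_distrib_right]

lemma Nontriv.clade_nonempty {s : Subsplit α} (h : Nontriv s) : (clade s).Nonempty := by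
  induction s using Sym2.ind with
  | _ Y Z => exact h.1.mono subset_union_left

lemma eq_mk_clade_empty_of_not_nontriv {s : Subsplit α} (h : ¬ Nontriv s) :
    s = Sym2.mk (clade s) ∅ := by
  induction s using Sym2.ind with
  | _ Y Z =>
    simp only [Nontriv, Sym2.lift_mk, not_and_or, not_nonempty_iff_eq_empty] at h
    rcases h with rfl | rfl <;> simp

end Subsplit

section MutualPCSP

open Subsplit

variable {α : Type*} [DecidableEq α]

lemma clade_eq_of_mem_pcspSupportAt {P : Set (PCSPair α)} {t s : Subsplit α} {W : Finset α}
    (h : s ∈ pcspSupportAt P t W) : clade s = W := by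
  rcases h with ⟨h, _⟩ | rfl
  · exact h
  · simp

lemma exists_eq_mk_of_mem_boxTimes {s₁ s₂ s : Subsplit α} (h : s ∈ boxTimes s₁ s₂) :
    ∃ Y₁ Z₁ Y₂ Z₂ : Finset α, s₁ = Sym2.mk Y₁ Z₁ ∧ s₂ = Sym2.mk Y₂ Z₂ ∧
      s = Sym2.mk (Y₁ ∪ Y₂) (Z₁ ∪ Z₂) := by
  obtain ⟨Y₁, Z₁, Y₂, Z₂, h₁, h₂, h | h⟩ := h
  · exact ⟨Y₁, Z₁, Y₂, Z₂, h₁, h₂, h⟩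
  · exact ⟨Y₁, Z₁, Z₂, Y₂, h₁, h₂.trans Sym2.eq_swap, h⟩

lemma self_mem_boxTimes_restrict {s : Subsplit α} {X₁ X₂ : Finset α}
    (h : clade s ⊆ X₁ ∪ X₂) : s ∈ boxTimes (restrict s X₁) (restrict s X₂) := by
  induction s using Sym2.ind with
  | _ Y Z =>
    rw [clade_mk, union_subset_iff] at h
    refine ⟨Y ∩ X₁, Z ∩ X₁, Y ∩ X₂, Z ∩ X₂, restrict_mk .., restrict_mk .., Or.inl ?_⟩
    rw [← inter_union_distrib_left, ← inter_union_distrib_left, inter_eq_left.mpr h.1,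
      inter_eq_left.mpr h.2]

lemma union_inter_eq_left_of_disjoint {Y₁ Z₁ Y₂ Z₂ W X₁ X₂ : Finset α}
    (h₁ : Y₁ ∪ Z₁ = W ∩ X₁) (h₂ : Y₂ ∪ Z₂ = W ∩ X₂) (hd : Disjoint (Y₁ ∪ Y₂) (Z₁ ∪ Z₂)) :
    (Y₁ ∪ Y₂) ∩ X₁ = Y₁ := by
  simp only [Finset.ext_iff, mem_union, mem_inter] at h₁ h₂ ⊢
  rw [disjoint_left] at hd
  intro x
  specialize h₁ x; specialize h₂ x; specialize @hd x
  simp only [mem_union] at hd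
  tauto

lemma mem_or_eq_empty_of_update {s₁ t₁ u₁ : Subsplit α} {C : Finset α}
    (hu : (Nontriv s₁ ∧ u₁ = s₁) ∨ (¬ Nontriv s₁ ∧ u₁ = t₁))
    (ht : clade s₁ ∈ t₁ ∨ clade s₁ = ∅) (hC : C ∈ s₁) : C ∈ u₁ ∨ C = ∅ := by
  rcases hu with ⟨_, rfl⟩ | ⟨hs, rfl⟩
  · exact Or.inl hC
  · rw [eq_mk_clade_empty_of_not_nontriv hs, Sym2.mem_iff] at hC
    rcases hC with rfl | rfl
    · exact ht
    · exact Or.inr rfl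

lemma reachState_step_invariant {W X₁ X₂ Y₁ Z₁ Y₂ Z₂ : Finset α} {t₁ t₂ u₁ u₂ : Subsplit α}
    (h₁ : Y₁ ∪ Z₁ = W ∩ X₁) (h₂ : Y₂ ∪ Z₂ = W ∩ X₂) (hd : Disjoint (Y₁ ∪ Y₂) (Z₁ ∪ Z₂))
    (hu₁ : (Nontriv (Sym2.mk Y₁ Z₁) ∧ u₁ = Sym2.mk Y₁ Z₁) ∨
      (¬ Nontriv (Sym2.mk Y₁ Z₁) ∧ u₁ = t₁))
    (hu₂ : (Nontriv (Sym2.mk Y₂ Z₂) ∧ u₂ = Sym2.mk Y₂ Z₂) ∨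
      (¬ Nontriv (Sym2.mk Y₂ Z₂) ∧ u₂ = t₂))
    (ht₁ : W ∩ X₁ ∈ t₁ ∨ W ∩ X₁ = ∅) (ht₂ : W ∩ X₂ ∈ t₂ ∨ W ∩ X₂ = ∅) :
    Y₁ ∪ Y₂ ⊆ X₁ ∪ X₂ ∧ ((Y₁ ∪ Y₂) ∩ X₁ ∈ u₁ ∨ (Y₁ ∪ Y₂) ∩ X₁ = ∅) ∧
      ((Y₁ ∪ Y₂) ∩ X₂ ∈ u₂ ∨ (Y₁ ∪ Y₂) ∩ X₂ = ∅) := by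
  have hY₁ : Y₁ ⊆ X₁ := subset_union_left.trans (h₁.trans_subset inter_subset_right)
  have hY₂ : Y₂ ⊆ X₂ := subset_union_left.trans (h₂.trans_subset inter_subset_right)
  refine ⟨union_subset_union hY₁ hY₂, ?_, ?_⟩
  · rw [union_inter_eq_left_of_disjoint h₁ h₂ hd]
    exact mem_or_eq_empty_of_update hu₁ (by rwa [clade_mk, h₁]) (Sym2.mem_mk_left _ _)
  · rw [union_comm, union_inter_eq_left_of_disjoint h₂ h₁
      (by rwa [union_comm Y₂, union_comm Z₂])]
    exact mem_or_eq_empty_of_update hu₂ (by rwa [clade_mk, h₂]) (Sym2.mem_mk_left _ _)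

lemma ReachState.invariant {P₁ P₂ : Set (PCSPair α)} {X₁ X₂ W W₁ W₂ : Finset α}
    {t t₁ t₂ : Subsplit α} (h : ReachState P₁ P₂ X₁ X₂ t W t₁ W₁ t₂ W₂) :
    W₁ = W ∩ X₁ ∧ W₂ = W ∩ X₂ ∧ W ⊆ X₁ ∪ X₂ ∧ (W₁ ∈ t₁ ∨ W₁ = ∅) ∧ (W₂ ∈ t₂ ∨ W₂ = ∅) := by
  induction h with
  | root =>
    exact ⟨(inter_eq_right.mpr subset_union_left).symm,
      (inter_eq_right.mpr subset_union_right).symm, subset_rfl,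
      Or.inl (Sym2.mem_mk_left _ _), Or.inl (Sym2.mem_mk_left _ _)⟩
  | step _ hs₁ hs₂ hbox hv _ hu₁ hu₂ hC _ ih =>
    obtain ⟨rfl, rfl, -, ht₁, ht₂⟩ := ih
    obtain ⟨Y₁, Z₁, Y₂, Z₂, rfl, rfl, rfl⟩ := exists_eq_mk_of_mem_boxTimes hbox
    have h₁ := clade_eq_of_mem_pcspSupportAt hs₁
    have h₂ := clade_eq_of_mem_pcspSupportAt hs₂
    rw [clade_mk] at h₁ h₂
    refine ⟨rfl, rfl, ?_⟩
    rcases Sym2.mem_iff.mp hC with rfl | rfl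
    · exact reachState_step_invariant h₁ h₂ hv hu₁ hu₂ ht₁ ht₂
    · rw [Sym2.eq_swap (a := Y₁)] at hu₁
      rw [Sym2.eq_swap (a := Y₂)] at hu₂
      exact reachState_step_invariant (by rwa [union_comm]) (by rwa [union_comm])
        (Disjoint.symm hv) hu₁ hu₂ ht₁ ht₂

lemma eq_root_or_nontriv_of_mem_subsplitsOfP {X' : Finset α} {P : Set (PCSPair α)}
    (hP : IsPCSPSupport X' P) {u : Subsplit α} (hu : u ∈ subsplitsOfP X' P) :
    u = Sym2.mk X' ∅ ∨ Nontriv u := by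
  rcases hu with (⟨s, hs⟩ | ⟨t, ht⟩) | rfl
  · exact (hP _ hs).2.2.2.2.2.symm
  · exact Or.inr (hP _ ht).2.1
  · exact Or.inl rfl

lemma restrict_mem_restrictT {τ : Finset (Subsplit α)} {s : Subsplit α} {B : Finset α}
    (hs : s ∈ τ) (hnt : Nontriv (restrict s B)) : restrict s B ∈ restrictT τ B :=
  mem_filter.mpr ⟨mem_image_of_mem _ hs, hnt⟩

lemma isPCSPOf_restrictT {X X' : Finset α} (hX : X' ⊆ X) {τ : Finset (Subsplit α)}
    {a s : Subsplit α} (hs : s ∈ τ) (ha : a ∈ τ ∨ a = Sym2.mk X ∅)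
    (ha' : restrict a X' = Sym2.mk X' ∅ ∨ Nontriv (restrict a X'))
    (hnt : Nontriv (restrict s X')) (hmem : clade (restrict s X') ∈ restrict a X') :
    IsPCSPOf X' (restrictT τ X') (restrict a X') (restrict s X') := by
  refine ⟨restrict_mem_restrictT hs hnt, ?_⟩
  rcases ha' with hroot | hnta
  · refine Or.inr ⟨?_, hroot⟩
    rw [hroot, Sym2.mem_iff] at hmem
    exact hmem.resolve_right hnt.clade_nonempty.ne_empty
  · rcases ha with haτ | rfl
    · exact Or.inl ⟨restrict_mem_restrictT haτ hnta, hmem⟩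
    · simp [Nontriv, inter_eq_right.mpr hX] at hnta

lemma restrict_mem_pcspSupportAt {X X' : Finset α} (hX : X' ⊆ X) {P : Set (PCSPair α)}
    (hP : IsPCSPSupport X' P) {τ : Finset (Subsplit α)}
    (hcov : ∀ t s : Subsplit α, IsPCSPOf X' (restrictT τ X') t s → (t, s) ∈ P)
    {a s : Subsplit α} (hs : s ∈ τ) (ha : a ∈ τ ∨ a = Sym2.mk X ∅)
    (haP : restrict a X' ∈ subsplitsOfP X' P)
    (hin : clade s ∩ X' ∈ restrict a X' ∨ clade s ∩ X' = ∅) :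
    restrict s X' ∈ pcspSupportAt P (restrict a X') (clade s ∩ X') := by
  by_cases hnt : Nontriv (restrict s X')
  · rw [← clade_restrict] at hin ⊢
    exact Or.inl ⟨rfl, hcov _ _ (isPCSPOf_restrictT hX hs ha
      (eq_root_or_nontriv_of_mem_subsplitsOfP hP haP) hnt
      (hin.resolve_right hnt.clade_nonempty.ne_empty))⟩
  · rw [← clade_restrict]
    exact Or.inr (eq_mk_clade_empty_of_not_nontriv hnt)

end MutualPCSP

section Statements

variable {α : Type*} [DecidableEq α]
theorem stmt5_general (X₁ X₂ : Finset α) (P₁ P₂ : Set (PCSPair α))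
    (hP₁ : IsPCSPSupport X₁ P₁) (hP₂ : IsPCSPSupport X₂ P₂)
    (τ : Finset (Subsplit α)) (hτ : IsTopology (X₁ ∪ X₂) τ)
    (hcov₁ : ∀ t s : Subsplit α, IsPCSPOf X₁ (restrictT τ X₁) t s → (t, s) ∈ P₁)
    (hcov₂ : ∀ t s : Subsplit α, IsPCSPOf X₂ (restrictT τ X₂) t s → (t, s) ∈ P₂)
    (t s : Subsplit α) (hts : IsPCSPOf (X₁ ∪ X₂) τ t s)
    (a₁ a₂ : Subsplit α)
    (ha₁ : IsAncestor (X₁ ∪ X₂) τ a₁ s)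
    (ha₁P : Subsplit.restrict a₁ X₁ ∈ subsplitsOfP X₁ P₁)
    (ha₂ : IsAncestor (X₁ ∪ X₂) τ a₂ s)
    (ha₂P : Subsplit.restrict a₂ X₂ ∈ subsplitsOfP X₂ P₂)
    (hreach : ReachState P₁ P₂ X₁ X₂ t (Subsplit.clade s)
      (Subsplit.restrict a₁ X₁) (Subsplit.clade s ∩ X₁)
      (Subsplit.restrict a₂ X₂) (Subsplit.clade s ∩ X₂)) :
    (t, s) ∈ mutualPCSP P₁ P₂ X₁ X₂ := by
  have hsτ : s ∈ τ := hts.1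
  obtain ⟨-, -, hsub, hin₁, hin₂⟩ := hreach.invariant
  exact ⟨_, _, _, _, _, Subsplit.restrict s X₁, Subsplit.restrict s X₂, hreach,
    restrict_mem_pcspSupportAt subset_union_left hP₁ hcov₁ hsτ ha₁.1 ha₁P hin₁,
    restrict_mem_pcspSupportAt subset_union_right hP₂ hcov₂ hsτ ha₂.1 ha₂P hin₂,
    self_mem_boxTimes_restrict hsub, hτ.valid s hsτ, hτ.nontriv s hsτ⟩

theorem stmt5 (X₁ X₂ : Finset α) (P₁ P₂ : Set (PCSPair α))
    (hP₁ : IsPCSPSupport X₁ P₁) (hP₂ : IsPCSPSupport X₂ P₂)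
    (τ : Finset (Subsplit α)) (hτ : IsTopology (X₁ ∪ X₂) τ)
    (hcov₁ : ∀ t s : Subsplit α, IsPCSPOf X₁ (restrictT τ X₁) t s → (t, s) ∈ P₁)
    (hcov₂ : ∀ t s : Subsplit α, IsPCSPOf X₂ (restrictT τ X₂) t s → (t, s) ∈ P₂)
    (t s : Subsplit α) (hts : IsPCSPOf (X₁ ∪ X₂) τ t s)
    (a₁ a₂ : Subsplit α)
    (ha₁ : IsAncestor (X₁ ∪ X₂) τ a₁ s)
    (ha₁P : Subsplit.restrict a₁ X₁ ∈ subsplitsOfP X₁ P₁)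
    (ha₁min : ∀ a' : Subsplit α, IsAncestor (X₁ ∪ X₂) τ a' s →
      Subsplit.restrict a' X₁ ∈ subsplitsOfP X₁ P₁ →
      Subsplit.clade a₁ ⊆ Subsplit.clade a')
    (ha₂ : IsAncestor (X₁ ∪ X₂) τ a₂ s)
    (ha₂P : Subsplit.restrict a₂ X₂ ∈ subsplitsOfP X₂ P₂)
    (ha₂min : ∀ a' : Subsplit α, IsAncestor (X₁ ∪ X₂) τ a' s →
      Subsplit.restrict a' X₂ ∈ subsplitsOfP X₂ P₂ →
      Subsplit.clade a₂ ⊆ Subsplit.clade a')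
    (hreach : ReachState P₁ P₂ X₁ X₂ t (Subsplit.clade s)
      (Subsplit.restrict a₁ X₁) (Subsplit.clade s ∩ X₁)
      (Subsplit.restrict a₂ X₂) (Subsplit.clade s ∩ X₂)) :
    (t, s) ∈ mutualPCSP P₁ P₂ X₁ X₂ :=
  stmt5_general X₁ X₂ P₁ P₂ hP₁ hP₂ τ hτ hcov₁ hcov₂ t s hts a₁ a₂ ha₁ ha₁P ha₂ ha₂P hreach

end Statements
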